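/- arXiv:math/0206007 — 7 statements merged into one kernel-verified Lean document; each statement's English description precedes it below -/
import Mathlib

section
/- Let E be an open subset of X. Then E is G-invariant if and only if E is quasi-invariant, i.e. E = q⁻¹(q(E)). -/
open MulAction

/-- The quasi-orbit equivalence relation: `x ~ y` iff `closure (G • x) = closure (G • y)`. -/
def quasiOrbitSetoid (G X : Type*) [Group G] [MulAction G X] [TopologicalSpace X] :
    Setoid X where
  r x y := closure (orbit G x) = closure (orbit G y)
  iseqv := ⟨fun _ => rfl, Eq.symm, Eq.trans⟩

/-- An open subset `E` of `X` is `G`-invariant iff it is quasi-invariant, i.e.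
`E = q⁻¹(q(E))` where `q : X → Qorb(X)` is the quotient map onto the quasi-orbit space. -/
theorem open_invariant_iff_quasiInvariant {G X : Type*} [Group G] [MulAction G X]
    [TopologicalSpace X] (hcont : ∀ t : G, Continuous fun x : X => t • x)
    (E : Set X) (hE : IsOpen E) :
    (∀ t : G, ∀ x ∈ E, t • x ∈ E) ↔
      E = Quotient.mk (quasiOrbitSetoid G X) ⁻¹'
            (Quotient.mk (quasiOrbitSetoid G X) '' E) := by
  constructor
  · intro hinv
    apply Set.Subset.antisymm (Set.subset_preimage_image _ _)
    intro y hy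
    obtain ⟨x, hxE, hxy⟩ := hy
    have hclos : closure (orbit G x) = closure (orbit G y) := Quotient.exact hxy
    have hx : x ∈ closure (orbit G y) := by
      rw [← hclos]
      exact subset_closure (mem_orbit_self x)
    obtain ⟨z, hzE, hz⟩ := mem_closure_iff.mp hx E hE hxE
    obtain ⟨t, rfl⟩ := hz
    have := hinv t⁻¹ _ hzE
    simpa using this
  · intro h t x hx
    rw [h]
    refine ⟨x, hx, ?_⟩
    apply Quotient.sound
    show closure (orbit G x) = closure (orbit G (t • x))
    rw [orbit_smul]
end

section
/- For every Borel subset B of the orbit space Orb(X), the image ψ(B) is a Borel subset of Qorb(X) and ψ⁻¹(ψ(B)) = B; moreover, the map B ↦ ψ(B) is a bijection from the collection of Borel subsets of Orb(X) onto the collection of Borel subsets of Qorb(X), with inverse C ↦ ψ⁻¹(C). -/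
open MulAction MeasureTheory

/-- The canonical map `ψ : Orb(X) → Qorb(X)` from the orbit space to the quasi-orbit
space, sending an orbit to its quasi-orbit. -/
def quasiOrbitMap (G X : Type*) [Group G] [MulAction G X] [TopologicalSpace X] :
    Quotient (orbitRel G X) → Quotient (quasiOrbitSetoid G X) :=
  Quotient.lift (fun x => Quotient.mk (quasiOrbitSetoid G X) x)
    (fun x y h => Quotient.sound (by
      show closure (orbit G x) = closure (orbit G y)
      rw [orbit_eq_iff.mpr h]))

section Aux

variable {G X : Type*} [Group G] [MulAction G X] [TopologicalSpace X]

lemma quasiOrbitMap_surjective : Function.Surjective (quasiOrbitMap G X) := fun c =>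
  Quotient.inductionOn c fun x => ⟨Quotient.mk (orbitRel G X) x, rfl⟩

/-- Every open subset of the orbit space is saturated for `ψ`. -/
lemma quasiOrbitMap_saturated_of_isOpen {U : Set (Quotient (orbitRel G X))} (hU : IsOpen U) :
    quasiOrbitMap G X ⁻¹' (quasiOrbitMap G X '' U) = U := by
  apply Set.Subset.antisymm _ (Set.subset_preimage_image _ _)
  rintro b ⟨a, haU, hab⟩
  induction a using Quotient.inductionOn with
  | h x =>
    induction b using Quotient.inductionOn with
    | h y =>
      have hxy : closure (orbit G x) = closure (orbit G y) := Quotient.exact hab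
      have hopen : IsOpen (Quotient.mk (orbitRel G X) ⁻¹' U) := hU.preimage continuous_quotient_mk'
      have hx : x ∈ Quotient.mk (orbitRel G X) ⁻¹' U := haU
      have hxc : x ∈ closure (orbit G y) := by
        rw [← hxy]; exact subset_closure (mem_orbit_self x)
      obtain ⟨z, hzU, hz⟩ := mem_closure_iff.mp hxc _ hopen hx
      have : Quotient.mk (orbitRel G X) z = Quotient.mk (orbitRel G X) y := Quotient.sound hz
      simpa [this] using hzU

lemma quasiOrbitMap_continuous : Continuous (quasiOrbitMap G X) :=
  Continuous.quotient_lift continuous_quotient_mk' _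

/-- `ψ` is a quotient map: a set is open in the quasi-orbit space iff its preimage is open. -/
lemma isOpen_quasiOrbit_iff {C : Set (Quotient (quasiOrbitSetoid G X))} :
    IsOpen C ↔ IsOpen (quasiOrbitMap G X ⁻¹' C) := by
  constructor
  · exact fun h => h.preimage quasiOrbitMap_continuous
  · intro h
    have : IsOpen (Quotient.mk (orbitRel G X) ⁻¹' (quasiOrbitMap G X ⁻¹' C)) :=
      h.preimage continuous_quotient_mk'
    have heq : Quotient.mk (orbitRel G X) ⁻¹' (quasiOrbitMap G X ⁻¹' C)
        = Quotient.mk (quasiOrbitSetoid G X) ⁻¹' C := rfl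
    rw [heq] at this
    exact isOpen_coinduced.mpr this

end Aux

/-- `ψ` gives a bijective correspondence between Borel subsets of the orbit space
`Orb(X)` and Borel subsets of the quasi-orbit space `Qorb(X)`: the image of a Borel
set is Borel and is saturated, and the inverse correspondence is `C ↦ ψ⁻¹(C)`. -/
theorem borel_bijection_orbit_quasiOrbit {G X : Type*} [Group G] [MulAction G X]
    [TopologicalSpace X] (hcont : ∀ t : G, Continuous fun x : X => t • x) :
    (∀ B : Set (Quotient (orbitRel G X)),
        MeasurableSet[borel (Quotient (orbitRel G X))] B →
          MeasurableSet[borel (Quotient (quasiOrbitSetoid G X))] (quasiOrbitMap G X '' B) ∧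
            quasiOrbitMap G X ⁻¹' (quasiOrbitMap G X '' B) = B) ∧
    (∀ C : Set (Quotient (quasiOrbitSetoid G X)),
        MeasurableSet[borel (Quotient (quasiOrbitSetoid G X))] C →
          MeasurableSet[borel (Quotient (orbitRel G X))] (quasiOrbitMap G X ⁻¹' C) ∧
            quasiOrbitMap G X '' (quasiOrbitMap G X ⁻¹' C) = C) := by
  set ψ := quasiOrbitMap G X with hψ
  have hsurj : Function.Surjective ψ := quasiOrbitMap_surjective
  have hmeas : Measurable[borel _, borel _] ψ :=
    (quasiOrbitMap_continuous (G := G) (X := X)).borel_measurable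
  have main : ∀ B : Set (Quotient (orbitRel G X)),
      MeasurableSet[borel (Quotient (orbitRel G X))] B →
        MeasurableSet[borel (Quotient (quasiOrbitSetoid G X))] (ψ '' B) ∧
          ψ ⁻¹' (ψ '' B) = B := by
    intro B hB
    rw [borel] at hB
    induction B, hB using MeasurableSpace.generateFrom_induction with
    | hC t ht _ =>
      have hsat := quasiOrbitMap_saturated_of_isOpen (G := G) ht
      refine ⟨?_, hsat⟩
      have : IsOpen (ψ '' t) := isOpen_quasiOrbit_iff.mpr (by rw [hsat]; exact ht)
      rw [borel]
      exact MeasurableSpace.measurableSet_generateFrom this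
    | empty => simp
    | compl t ht iht =>
      obtain ⟨hm, hsat⟩ := iht
      have hcompl : tᶜ = ψ ⁻¹' (ψ '' t)ᶜ := by rw [Set.preimage_compl, hsat]
      have himg : ψ '' tᶜ = (ψ '' t)ᶜ := by
        rw [hcompl, Set.image_preimage_eq _ hsurj]
      refine ⟨by rw [himg]; exact hm.compl, by rw [himg]; exact hcompl.symm⟩
    | iUnion s hs ihs =>
      have himg : ψ '' (⋃ i, s i) = ⋃ i, ψ '' s i := Set.image_iUnion
      constructor
      · rw [himg]; exact MeasurableSet.iUnion fun n => (ihs n).1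
      · rw [himg, Set.preimage_iUnion]
        exact Set.iUnion_congr fun n => (ihs n).2
  refine ⟨main, fun C hC => ?_⟩
  exact ⟨hmeas hC, Set.image_preimage_eq C hsurj⟩
end

section
/- Let F be a G-invariant subset of X and let Fᶜ = X \ F. Then q(Int(F)) = Int(Qorb(X) \ q(Fᶜ)), where Int denotes topological interior (in X on the left and in Qorb(X) on the right). -/
open MulAction

/-- For a `G`-invariant subset `F` of `X`, the image under the quasi-orbit quotient map
`q` of the interior of `F` is the interior of `Qorb(X) \ q(Fᶜ)`. -/
theorem image_interior_eq_interior_compl_image_compl {G X : Type*} [Group G]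
    [MulAction G X] [TopologicalSpace X]
    (hcont : ∀ t : G, Continuous fun x : X => t • x)
    (F : Set X) (hF : ∀ t : G, ∀ x ∈ F, t • x ∈ F) :
    Quotient.mk (quasiOrbitSetoid G X) '' interior F =
      interior ((Quotient.mk (quasiOrbitSetoid G X) '' Fᶜ)ᶜ) := by
  set S := quasiOrbitSetoid G X with hS
  set Q : X → Quotient S := Quotient.mk S with hQ
  have hexact : ∀ x y : X, Q x = Q y → closure (orbit G x) = closure (orbit G y) :=
    fun x y h => Quotient.exact h
  have hsound : ∀ (t : G) (x : X), Q (t • x) = Q x := by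
    intro t x
    exact Quotient.sound (by
      show closure (orbit G (t • x)) = closure (orbit G x)
      rw [orbit_smul])
  apply subset_antisymm
  · apply interior_maximal
    · rintro s ⟨x, hx, rfl⟩ ⟨y, hy, hyx⟩
      -- hyx : Q y = Q x
      have hr : closure (orbit G y) = closure (orbit G x) := hexact y x hyx
      have hx' : x ∈ closure (orbit G y) := by
        have : x ∈ closure (orbit G x) := subset_closure (mem_orbit_self x)
        rwa [← hr] at this
      obtain ⟨z, hzI, hzO⟩ := mem_closure_iff.mp hx' (interior F) isOpen_interior hx
      obtain ⟨t, rfl⟩ := hzO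
      exact hy (by simpa using hF t⁻¹ _ (interior_subset hzI))
    · -- Q '' (interior F) is open
      have hpre : Q ⁻¹' (Q '' interior F) = ⋃ t : G, (fun x => t • x) ⁻¹' interior F := by
        ext x
        simp only [Set.mem_preimage, Set.mem_image, Set.mem_iUnion]
        constructor
        · rintro ⟨y, hyU, hxy⟩
          have hr : closure (orbit G y) = closure (orbit G x) := hexact y x hxy
          have hy' : y ∈ closure (orbit G x) := by
            have : y ∈ closure (orbit G y) := subset_closure (mem_orbit_self y)
            rwa [hr] at this
          obtain ⟨z, hzI, hzO⟩ := mem_closure_iff.mp hy' (interior F) isOpen_interior hyU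
          obtain ⟨t, rfl⟩ := hzO
          exact ⟨t, hzI⟩
        · rintro ⟨t, ht⟩
          exact ⟨t • x, ht, hsound t x⟩
      have : IsOpen (Q ⁻¹' (Q '' interior F)) := by
        rw [hpre]
        exact isOpen_iUnion fun t => isOpen_interior.preimage (hcont t)
      exact isOpen_coinduced.mpr this
  · rintro s hs
    obtain ⟨x, rfl⟩ := Quotient.exists_rep s
    refine ⟨x, ?_, rfl⟩
    have hopen : IsOpen (Q ⁻¹' interior ((Q '' Fᶜ)ᶜ)) :=
      isOpen_interior.preimage continuous_quotient_mk'
    have hsub : Q ⁻¹' interior ((Q '' Fᶜ)ᶜ) ⊆ F := by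
      intro z hz
      by_contra hzF
      exact (interior_subset hz) ⟨z, hzF, rfl⟩
    exact interior_maximal hsub hopen hs
end

section
/- The set q(⋃_{t ∈ G, t ≠ e} X^t) is nowhere dense in Qorb(X) if and only if q(Int(X_free)) is dense in Qorb(X). -/
open MulAction

/-- `q(⋃_{t ≠ e} Xᵗ)` is nowhere dense in the quasi-orbit space `Qorb(X)` if and only if
`q(Int(X_free))` is dense in `Qorb(X)`, where `Xᵗ` is the fixed-point set of `t` and
`X_free = ⋂_{t ≠ e} (X \ Xᵗ)` is the set of points with trivial stabilizer. -/
theorem image_fixedPoints_nowhereDense_iff_image_interior_free_dense {G X : Type*}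
    [Group G] [MulAction G X] [TopologicalSpace X]
    (hcont : ∀ t : G, Continuous fun x : X => t • x) :
    IsNowhereDense (Quotient.mk (quasiOrbitSetoid G X) ''
        ⋃ (t : G) (_ : t ≠ 1), {x : X | t • x = x}) ↔
      Dense (Quotient.mk (quasiOrbitSetoid G X) ''
        interior (⋂ (t : G) (_ : t ≠ 1), {x : X | t • x = x}ᶜ)) := by
  set q := Quotient.mk (quasiOrbitSetoid G X) with hq
  set F : Set X := ⋃ (t : G) (_ : t ≠ 1), {x : X | t • x = x} with hF
  set C : Set X := closure F with hC
  have hFc : (⋂ (t : G) (_ : t ≠ 1), {x : X | t • x = x}ᶜ) = Fᶜ := by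
    simp [hF, Set.compl_iUnion]
  have hFinv : ∀ g : G, ∀ x ∈ F, g • x ∈ F := by
    intro g x hx
    simp only [hF, Set.mem_iUnion] at hx ⊢
    obtain ⟨t, ht, hfix⟩ := hx
    refine ⟨g * t * g⁻¹, fun h => ht ?_, ?_⟩
    · have := congrArg (fun z => g⁻¹ * z * g) h
      simpa [mul_assoc] using this
    · show (g * t * g⁻¹) • (g • x) = g • x
      rw [smul_smul]
      have : g * t * g⁻¹ * g = g * t := by group
      rw [this, mul_smul, hfix]
  have hCinv : ∀ g : G, ∀ x ∈ C, g • x ∈ C := by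
    intro g x hx
    have h1 := image_closure_subset_closure_image (hcont g) (s := F)
    have h2 : (fun y : X => g • y) '' F ⊆ F := by
      rintro _ ⟨y, hy, rfl⟩; exact hFinv g y hy
    exact closure_mono h2 (h1 ⟨x, hx, rfl⟩)
  have hsat : q ⁻¹' (q '' C) = C := by
    refine Set.Subset.antisymm ?_ (Set.subset_preimage_image q C)
    rintro y ⟨x, hx, hxy⟩
    have hr : closure (orbit G y) = closure (orbit G x) := Quotient.exact hxy.symm
    have horb : orbit G x ⊆ C := by
      rintro _ ⟨g, rfl⟩; exact hCinv g x hx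
    have : y ∈ closure (orbit G y) := subset_closure (mem_orbit_self y)
    rw [hr] at this
    exact closure_minimal horb isClosed_closure this
  have hqm : Topology.IsQuotientMap q := isQuotientMap_quot_mk
  have hqC_closed : IsClosed (q '' C) := by
    rw [← hqm.isClosed_preimage, hsat]; exact isClosed_closure
  have hclos : closure (q '' F) = q '' C := by
    refine Set.Subset.antisymm (closure_minimal (Set.image_mono (f := q) subset_closure) hqC_closed) ?_
    exact (image_closure_subset_closure_image hqm.continuous)
  have hcompl : q '' Cᶜ = (q '' C)ᶜ := by
    apply Set.Subset.antisymm
    · rintro _ ⟨x, hx, rfl⟩ hmem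
      exact hx (hsat ▸ hmem)
    · rintro z hz
      obtain ⟨x, rfl⟩ := Quotient.exists_rep z
      exact ⟨x, fun hx => hz ⟨x, hx, rfl⟩, rfl⟩
  rw [hFc, interior_compl, ← hC, hcompl]
  rw [IsNowhereDense, hclos, dense_iff_closure_eq, closure_compl]
  simp
end

section
/- If q(Int(X_free)) is dense in Qorb(X), then ⋃_{t ∈ G, t ≠ e} X^t is nowhere dense in X (equivalently, Int(X_free) is dense in X). -/
open MulAction

/-- If `q(Int(X_free))` is dense in the quasi-orbit space `Qorb(X)`, then
`⋃_{t ≠ e} Xᵗ` is nowhere dense in `X` (equivalently, `Int(X_free)` is dense in `X`). -/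
theorem nowhereDense_of_image_interior_free_dense {G X : Type*}
    [Group G] [MulAction G X] [TopologicalSpace X]
    (hcont : ∀ t : G, Continuous fun x : X => t • x)
    (hdense : Dense (Quotient.mk (quasiOrbitSetoid G X) ''
      interior (⋂ (t : G) (_ : t ≠ 1), {x : X | t • x = x}ᶜ))) :
    IsNowhereDense (⋃ (t : G) (_ : t ≠ 1), {x : X | t • x = x}) ∧
      Dense (interior (⋂ (t : G) (_ : t ≠ 1), {x : X | t • x = x}ᶜ)) := by
  set A : Set X := ⋂ (t : G) (_ : t ≠ 1), {x : X | t • x = x}ᶜ with hA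
  -- A is invariant
  have hAinv : ∀ (g : G) (x : X), x ∈ A → g • x ∈ A := by
    intro g x hx
    simp only [hA, Set.mem_iInter, Set.mem_compl_iff, Set.mem_setOf_eq] at hx ⊢
    intro t ht hfix
    have hconj : (g⁻¹ * t * g) • x = x := by
      rw [mul_smul, mul_smul, hfix, inv_smul_smul]
    have h1 : g⁻¹ * t * g ≠ 1 := by
      intro h
      apply ht
      have := congrArg (fun u => g * u * g⁻¹) h
      simpa [mul_assoc] using this
    exact hx _ h1 hconj
  -- interior A is invariant
  have hFinv : ∀ (g : G) (x : X), x ∈ interior A → g • x ∈ interior A := by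
    intro g x hx
    have hopen : IsOpen ((fun y : X => g⁻¹ • y) ⁻¹' interior A) :=
      isOpen_interior.preimage (hcont g⁻¹)
    refine mem_interior_iff_mem_nhds.2 (Filter.mem_of_superset (hopen.mem_nhds ?_) ?_)
    · show g⁻¹ • g • x ∈ interior A
      simpa using hx
    · intro y hy
      have h2 : g • (g⁻¹ • y) ∈ A := hAinv g _ (interior_subset hy)
      simpa using h2
  -- density of interior A in X
  have hDense : Dense (interior A) := by
    rw [dense_iff_inter_open]
    intro U hU hUne
    obtain ⟨u, hu⟩ := hUne
    set W : Set X := ⋃ g : G, (fun x : X => g • x) ⁻¹' U with hW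
    have hWopen : IsOpen W := isOpen_iUnion fun g => hU.preimage (hcont g)
    have hsat : Quotient.mk (quasiOrbitSetoid G X) ⁻¹'
        (Quotient.mk (quasiOrbitSetoid G X) '' W) = W := by
      apply Set.Subset.antisymm
      · rintro x ⟨y, hyW, hxy⟩
        have hrel : closure (orbit G y) = closure (orbit G x) := Quotient.exact hxy
        obtain ⟨g, hg⟩ := Set.mem_iUnion.1 hyW
        have h1 : g • y ∈ closure (orbit G x) := hrel ▸ subset_closure ⟨g, rfl⟩
        obtain ⟨z, hzU, hzorb⟩ := mem_closure_iff.1 h1 U hU hg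
        obtain ⟨g', rfl⟩ := hzorb
        exact Set.mem_iUnion.2 ⟨g', hzU⟩
      · intro x hx; exact ⟨x, hx, rfl⟩
    have hQopen : IsOpen (Quotient.mk (quasiOrbitSetoid G X) '' W) := by
      rw [isOpen_coinduced (f := Quotient.mk (quasiOrbitSetoid G X)), hsat]
      exact hWopen
    have hQne : (Quotient.mk (quasiOrbitSetoid G X) '' W).Nonempty := by
      refine ⟨_, ⟨u, ?_, rfl⟩⟩
      exact Set.mem_iUnion.2 ⟨1, by simpa using hu⟩
    obtain ⟨p, hpW, hpF⟩ := hdense.inter_open_nonempty _ hQopen hQne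
    obtain ⟨x, hxF, rfl⟩ := hpF
    have hxW : x ∈ W := by rw [← hsat]; exact hpW
    obtain ⟨g, hg⟩ := Set.mem_iUnion.1 hxW
    exact ⟨g • x, hg, hFinv g x hxF⟩
  constructor
  · have hAeq : A = (⋃ (t : G) (_ : t ≠ 1), {x : X | t • x = x})ᶜ := by
      simp [hA, Set.compl_iUnion]
    have : Dense (interior ((⋃ (t : G) (_ : t ≠ 1), {x : X | t • x = x})ᶜ)) := hAeq ▸ hDense
    rw [interior_compl] at this
    have h := interior_eq_empty_iff_dense_compl.2 this
    exact h
  · exact hDense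
end

section
/- If Int(U ∩ X_free) is non-empty for every non-empty G-invariant open subset U of X, then q(Int(X_free)) is dense in Qorb(X). -/
open MulAction

/-- If `Int(U ∩ X_free)` is non-empty for every non-empty `G`-invariant open subset `U`
of `X`, then `q(Int(X_free))` is dense in the quasi-orbit space `Qorb(X)`. -/
theorem image_interior_free_dense_of_interior_inter_nonempty {G X : Type*}
    [Group G] [MulAction G X] [TopologicalSpace X]
    (hcont : ∀ t : G, Continuous fun x : X => t • x)
    (h : ∀ U : Set X, IsOpen U → U.Nonempty → (∀ t : G, ∀ x ∈ U, t • x ∈ U) →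
      (interior (U ∩ ⋂ (t : G) (_ : t ≠ 1), {x : X | t • x = x}ᶜ)).Nonempty) :
    Dense (Quotient.mk (quasiOrbitSetoid G X) ''
      interior (⋂ (t : G) (_ : t ≠ 1), {x : X | t • x = x}ᶜ)) := by
  rw [dense_iff_inter_open]
  intro V hV hVne
  set F := ⋂ (t : G) (_ : t ≠ 1), {x : X | t • x = x}ᶜ
  set q := Quotient.mk (quasiOrbitSetoid G X)
  have hqU : IsOpen (q ⁻¹' V) := hV.preimage continuous_quotient_mk'
  obtain ⟨v, hv⟩ := hVne
  obtain ⟨x, rfl⟩ := Quotient.exists_rep v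
  have hUne : (q ⁻¹' V).Nonempty := ⟨x, hv⟩
  have hinv : ∀ t : G, ∀ y ∈ q ⁻¹' V, t • y ∈ q ⁻¹' V := by
    intro t y hy
    have : q (t • y) = q y := Quotient.sound (by
      show closure (orbit G (t • y)) = closure (orbit G y)
      rw [orbit_smul])
    simpa [Set.mem_preimage, this] using hy
  obtain ⟨z, hz⟩ := h (q ⁻¹' V) hqU hUne hinv
  refine ⟨q z, ?_, ⟨z, ?_, rfl⟩⟩
  · exact interior_subset hz |>.1
  · exact interior_mono (Set.inter_subset_right) hz
end

section
/- The set ⋃_{t ∈ G, t ≠ e} X^t is nowhere dense in X if and only if there exists an open, dense, G-invariant subset U ⊆ X on which the action of G is free, i.e. t·x ≠ x for all x ∈ U and all t ∈ G with t ≠ e. -/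
/-- The union `⋃_{t ≠ e} Xᵗ` of the fixed-point sets of the non-identity elements of `G`
is nowhere dense in `X` if and only if there is an open, dense, `G`-invariant subset `U`
of `X` on which the action of `G` is free. -/
theorem nowhereDense_iff_free_on_dense_open_invariant {G X : Type*}
    [Group G] [MulAction G X] [TopologicalSpace X]
    (hcont : ∀ t : G, Continuous fun x : X => t • x) :
    IsNowhereDense (⋃ (t : G) (_ : t ≠ 1), {x : X | t • x = x}) ↔
      ∃ U : Set X, IsOpen U ∧ Dense U ∧ (∀ t : G, ∀ x ∈ U, t • x ∈ U) ∧
        ∀ x ∈ U, ∀ t : G, t ≠ 1 → t • x ≠ x := by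
  set S : Set X := ⋃ (t : G) (_ : t ≠ 1), {x : X | t • x = x} with hS
  have hSmem : ∀ x, x ∈ S ↔ ∃ t : G, t ≠ 1 ∧ t • x = x := by
    intro x; simp [hS]
  have hSinv : ∀ (t : G), ∀ x ∈ S, t • x ∈ S := by
    intro t x hx
    obtain ⟨s, hs1, hsx⟩ := (hSmem x).1 hx
    refine (hSmem (t • x)).2 ⟨t * s * t⁻¹, ?_, ?_⟩
    · intro h
      apply hs1
      have := congrArg (fun g => t⁻¹ * g * t) h
      simpa [mul_assoc] using this
    · simp [mul_smul, hsx]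
  constructor
  · intro h
    refine ⟨(closure S)ᶜ, isClosed_closure.isOpen_compl, ?_, ?_, ?_⟩
    · rwa [← interior_eq_empty_iff_dense_compl]
    · intro t x hx
      intro hmem
      apply hx
      have hcl : closure S ⊆ (fun x : X => t • x) ⁻¹' closure S := by
        apply closure_minimal
        · intro y hy
          exact subset_closure (hSinv t y hy)
        · exact IsClosed.preimage (hcont t) isClosed_closure
      have hcl' : closure S ⊆ (fun x : X => t⁻¹ • x) ⁻¹' closure S := by
        apply closure_minimal
        · intro y hy
          exact subset_closure (hSinv t⁻¹ y hy)
        · exact IsClosed.preimage (hcont t⁻¹) isClosed_closure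
      have := hcl' hmem
      simpa using this
    · intro x hx t ht1 htx
      exact hx (subset_closure ((hSmem x).2 ⟨t, ht1, htx⟩))
  · rintro ⟨U, hO, hD, hInv, hFree⟩
    have hsub : S ⊆ Uᶜ := by
      intro x hx hxU
      obtain ⟨t, ht1, htx⟩ := (hSmem x).1 hx
      exact hFree x hxU t ht1 htx
    have hclsub : closure S ⊆ Uᶜ := closure_minimal hsub hO.isClosed_compl
    have : interior (closure S) ⊆ interior Uᶜ := interior_mono hclsub
    rw [hD.interior_compl] at this
    exact Set.subset_empty_iff.1 this
end
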